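/- Let H be a real Hilbert space, A : D(A) ⊆ H → H a self-adjoint positive operator with compact inverse, with eigenvalues 0 < λ₁ ≤ λ₂ ≤ ⋯ and orthonormal eigenbasis (w_j). Let e ∈ H be a unit vector with e ∉ span{w₁,…,w_m} for every m. Fix k ≥ 1, ν > 0, κ > 0 and reals p, q. Then for each m the 2m×2m linear system κk β_l + ν∑_j [δ_{jl} - ⟨w_j,e⟩⟨e,w_l⟩] λ_j α_j = κk q⟨e,w_l⟩, -κk α_l + ν∑_j [δ_{jl} - ⟨w_j,e⟩⟨e,w_l⟩] λ_j β_j = -κk p⟨e,w_l⟩ (l = 1,…,m) has a unique solution (α, β) ∈ ℝ^m × ℝ^m. -/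
import Mathlib

open scoped RealInnerProductSpace

/-- Strict Bessel: since `e` is a unit vector not in the span of the orthonormal
family `w 0, …, w (m-1)`, the sum of squared coefficients is `< 1`. -/
lemma bessel_strict {H : Type*} [NormedAddCommGroup H] [InnerProductSpace ℝ H]
    (w : ℕ → H) (hw : Orthonormal ℝ w) (e : H) (he : ‖e‖ = 1) (m : ℕ)
    (hnot : e ∉ Submodule.span ℝ (Set.range fun j : Fin m => w j)) :
    ∑ j : Fin m, ⟪e, w j⟫ ^ 2 < 1 := by
  classical
  set c : Fin m → ℝ := fun j => ⟪e, w j⟫ with hc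
  have hw' : Orthonormal ℝ (fun j : Fin m => w j) := hw.comp _ Fin.val_injective
  set v : H := ∑ j : Fin m, c j • w j with hv
  have hvmem : v ∈ Submodule.span ℝ (Set.range fun j : Fin m => w j) := by
    refine Submodule.sum_mem _ fun j _ => Submodule.smul_mem _ _ ?_
    exact Submodule.subset_span ⟨j, rfl⟩
  have hev : e ≠ v := fun h => hnot (h ▸ hvmem)
  have hvv : ⟪v, v⟫ = ∑ j : Fin m, c j ^ 2 := by
    have := hw'.inner_sum c c Finset.univ
    simpa [sq] using this
  have hevv : ⟪e, v⟫ = ∑ j : Fin m, c j ^ 2 := by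
    rw [hv, inner_sum]
    refine Finset.sum_congr rfl fun j _ => ?_
    rw [real_inner_smul_right, sq]
  have horth : ⟪e - v, v⟫ = 0 := by
    rw [inner_sub_left, hvv, hevv, sub_self]
  have hsq : ‖e‖ ^ 2 = ‖e - v‖ ^ 2 + 2 * ⟪e - v, v⟫ + ‖v‖ ^ 2 := by
    have := norm_add_sq_real (e - v) v
    simpa using this
  have hvnorm : ‖v‖ ^ 2 = ∑ j : Fin m, c j ^ 2 := by
    rw [← real_inner_self_eq_norm_sq, hvv]
  have hpos : 0 < ‖e - v‖ ^ 2 := by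
    have h0 : e - v ≠ 0 := sub_ne_zero.mpr hev
    exact pow_pos (norm_pos_iff.mpr h0) 2
  have : (1 : ℝ) = ‖e - v‖ ^ 2 + ∑ j : Fin m, c j ^ 2 := by
    rw [← hvnorm]
    rw [he] at hsq
    simpa [horth] using hsq
  linarith

set_option maxHeartbeats 1000000 in
/-- Let `A` be a symmetric positive operator on a real Hilbert space with
orthonormal eigenvectors `w_j` and positive nondecreasing eigenvalues `λ_j`,
and let `e` be a unit vector not lying in any of the spans
`span{w₀,…,w_{m-1}}`.  For `k ≥ 1`, `ν > 0`, `κ > 0` and reals `p, q`, the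
`2m × 2m` linear system
`κk β_l + ν ∑_j [δ_{jl} - ⟪w_j,e⟫⟪e,w_l⟫] λ_j α_j = κk q ⟪e,w_l⟫`,
`-κk α_l + ν ∑_j [δ_{jl} - ⟪w_j,e⟫⟪e,w_l⟫] λ_j β_j = -κk p ⟪e,w_l⟫`
has a unique solution `(α, β)`. -/
theorem stmt_5 {H : Type*} [NormedAddCommGroup H] [InnerProductSpace ℝ H]
    [CompleteSpace H] (A : H →ₗ[ℝ] H)
    (hAsym : ∀ u v : H, ⟪A u, v⟫ = ⟪u, A v⟫)
    (lam : ℕ → ℝ) (hpos : ∀ j, 0 < lam j) (hmono : Monotone lam)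
    (w : ℕ → H) (hw : Orthonormal ℝ w) (heig : ∀ j, A (w j) = lam j • w j)
    (e : H) (he : ‖e‖ = 1)
    (hnot : ∀ m : ℕ, e ∉ Submodule.span ℝ (Set.range fun j : Fin m => w j))
    (k : ℕ) (hk : 1 ≤ k) (ν κ p q : ℝ) (hν : 0 < ν) (hκ : 0 < κ) (m : ℕ) :
    ∃! αβ : (Fin m → ℝ) × (Fin m → ℝ), ∀ l : Fin m,
      (κ * k * αβ.2 l + ν * ∑ j : Fin m,
          ((if j = l then (1:ℝ) else 0) - ⟪w j, e⟫ * ⟪e, w l⟫) * lam j * αβ.1 j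
        = κ * k * q * ⟪e, w l⟫) ∧
      (-(κ * k) * αβ.1 l + ν * ∑ j : Fin m,
          ((if j = l then (1:ℝ) else 0) - ⟪w j, e⟫ * ⟪e, w l⟫) * lam j * αβ.2 j
        = -(κ * k) * p * ⟪e, w l⟫) := by
  classical
  set c : Fin m → ℝ := fun j => ⟪e, w j⟫ with hc
  have hcomm : ∀ j : Fin m, ⟪w j, e⟫ = c j := fun j => real_inner_comm _ _
  have hbessel : ∑ j : Fin m, c j ^ 2 < 1 := bessel_strict w hw e he m (hnot m)
  -- the linear map describing the system
  set f : ((Fin m → ℝ) × (Fin m → ℝ)) →ₗ[ℝ] ((Fin m → ℝ) × (Fin m → ℝ)) :=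
    { toFun := fun ab =>
        (fun l => κ * k * ab.2 l + ν * ∑ j : Fin m,
            ((if j = l then (1:ℝ) else 0) - c j * c l) * lam j * ab.1 j,
         fun l => -(κ * k) * ab.1 l + ν * ∑ j : Fin m,
            ((if j = l then (1:ℝ) else 0) - c j * c l) * lam j * ab.2 j)
      map_add' := by
        intro a b
        ext l <;>
          simp [mul_add, Finset.sum_add_distrib, Finset.mul_sum] <;> ring
      map_smul' := by
        intro r a
        ext l <;>
        · simp only [Prod.smul_fst, Prod.smul_snd, Pi.smul_apply, smul_eq_mul,
            RingHom.id_apply, mul_add, Finset.mul_sum]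
          congr 1
          · ring
          · exact Finset.sum_congr rfl fun j _ => by ring } with hf
  -- simplification of the sum
  have sum_eq : ∀ (a : Fin m → ℝ) (l : Fin m),
      (∑ j : Fin m, ((if j = l then (1:ℝ) else 0) - c j * c l) * lam j * a j)
        = lam l * a l - (∑ j : Fin m, c j * (lam j * a j)) * c l := by
    intro a l
    rw [Finset.sum_congr rfl (fun j _ => by ring :
      ∀ j ∈ Finset.univ, ((if j = l then (1:ℝ) else 0) - c j * c l) * lam j * a j
        = (if j = l then (1:ℝ) else 0) * (lam j * a j) - c l * (c j * (lam j * a j)))]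
    rw [Finset.sum_sub_distrib, ← Finset.mul_sum]
    simp [Finset.sum_ite_eq']
    ring
  -- injectivity
  have hinj : Function.Injective f := by
    rw [← LinearMap.ker_eq_bot, LinearMap.ker_eq_bot']
    intro ab hab
    obtain ⟨α, β⟩ := ab
    have h1 : ∀ l : Fin m, κ * k * β l + ν * ∑ j : Fin m,
        ((if j = l then (1:ℝ) else 0) - c j * c l) * lam j * α j = 0 := by
      intro l
      exact congrFun (congrArg Prod.fst hab) l
    have h2 : ∀ l : Fin m, -(κ * k) * α l + ν * ∑ j : Fin m,
        ((if j = l then (1:ℝ) else 0) - c j * c l) * lam j * β j = 0 := by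
      intro l
      exact congrFun (congrArg Prod.snd hab) l
    set x : Fin m → ℝ := fun j => lam j * α j with hx
    set y : Fin m → ℝ := fun j => lam j * β j with hy
    set S : ℝ := ∑ j : Fin m, c j * x j with hS
    set T : ℝ := ∑ j : Fin m, c j * y j with hT
    have h1' : ∀ l : Fin m, κ * k * β l + ν * (x l - S * c l) = 0 := by
      intro l; have := h1 l; rwa [sum_eq] at this
    have h2' : ∀ l : Fin m, -(κ * k) * α l + ν * (y l - T * c l) = 0 := by
      intro l; have := h2 l; rwa [sum_eq] at this
    have hzero : ∑ l : Fin m,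
        (x l * (κ * k * β l + ν * (x l - S * c l))
          + y l * (-(κ * k) * α l + ν * (y l - T * c l))) = 0 :=
      Finset.sum_eq_zero fun l _ => by rw [h1' l, h2' l]; ring
    have hexpand : ∑ l : Fin m,
        (x l * (κ * k * β l + ν * (x l - S * c l))
          + y l * (-(κ * k) * α l + ν * (y l - T * c l)))
        = ν * ((∑ l : Fin m, x l ^ 2) - S ^ 2)
          + ν * ((∑ l : Fin m, y l ^ 2) - T ^ 2) := by
      have step : ∀ l : Fin m,
          x l * (κ * k * β l + ν * (x l - S * c l))
            + y l * (-(κ * k) * α l + ν * (y l - T * c l))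
          = ν * x l ^ 2 - ν * S * (c l * x l)
            + (ν * y l ^ 2 - ν * T * (c l * y l)) := by
        intro l
        simp only [hx, hy]
        ring
      rw [Finset.sum_congr rfl fun l _ => step l]
      rw [Finset.sum_add_distrib, Finset.sum_sub_distrib, Finset.sum_sub_distrib,
        ← Finset.mul_sum, ← Finset.mul_sum, ← Finset.mul_sum, ← Finset.mul_sum,
        ← hS, ← hT]
      ring
    rw [hexpand] at hzero
    have hXnn : (0:ℝ) ≤ ∑ l : Fin m, x l ^ 2 := Finset.sum_nonneg fun l _ => sq_nonneg _
    have hYnn : (0:ℝ) ≤ ∑ l : Fin m, y l ^ 2 := Finset.sum_nonneg fun l _ => sq_nonneg _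
    have hCS1 : S ^ 2 ≤ (∑ j : Fin m, c j ^ 2) * ∑ l : Fin m, x l ^ 2 :=
      Finset.sum_mul_sq_le_sq_mul_sq _ _ _
    have hCS2 : T ^ 2 ≤ (∑ j : Fin m, c j ^ 2) * ∑ l : Fin m, y l ^ 2 :=
      Finset.sum_mul_sq_le_sq_mul_sq _ _ _
    have h1b : 0 ≤ (∑ l : Fin m, x l ^ 2) - S ^ 2 := by
      nlinarith [mul_nonneg (by linarith : (0:ℝ) ≤ 1 - ∑ j : Fin m, c j ^ 2) hXnn]
    have h2b : 0 ≤ (∑ l : Fin m, y l ^ 2) - T ^ 2 := by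
      nlinarith [mul_nonneg (by linarith : (0:ℝ) ≤ 1 - ∑ j : Fin m, c j ^ 2) hYnn]
    have hνa : ν * ((∑ l : Fin m, x l ^ 2) - S ^ 2) = 0 := by
      linarith [mul_nonneg hν.le h1b, mul_nonneg hν.le h2b]
    have hνb : ν * ((∑ l : Fin m, y l ^ 2) - T ^ 2) = 0 := by
      linarith [mul_nonneg hν.le h1b, mul_nonneg hν.le h2b]
    have hXS : (∑ l : Fin m, x l ^ 2) - S ^ 2 = 0 :=
      (mul_eq_zero.mp hνa).resolve_left hν.ne'
    have hYT : (∑ l : Fin m, y l ^ 2) - T ^ 2 = 0 :=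
      (mul_eq_zero.mp hνb).resolve_left hν.ne'
    have hX0 : ∑ l : Fin m, x l ^ 2 = 0 := by
      by_contra hne
      have hXpos : 0 < ∑ l : Fin m, x l ^ 2 := lt_of_le_of_ne hXnn (Ne.symm hne)
      nlinarith [mul_lt_mul_of_pos_right hbessel hXpos]
    have hY0 : ∑ l : Fin m, y l ^ 2 = 0 := by
      by_contra hne
      have hYpos : 0 < ∑ l : Fin m, y l ^ 2 := lt_of_le_of_ne hYnn (Ne.symm hne)
      nlinarith [mul_lt_mul_of_pos_right hbessel hYpos]
    have hα : α = 0 := by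
      funext l
      have := (Finset.sum_eq_zero_iff_of_nonneg fun l _ => sq_nonneg (x l)).mp hX0 l
        (Finset.mem_univ l)
      have hxl : x l = 0 := by
        have := sq_eq_zero_iff.mp this
        exact this
      have := hpos l
      have : lam l * α l = 0 := hxl
      simpa [mul_eq_zero, (hpos l).ne'] using this
    have hβ : β = 0 := by
      funext l
      have := (Finset.sum_eq_zero_iff_of_nonneg fun l _ => sq_nonneg (y l)).mp hY0 l
        (Finset.mem_univ l)
      have hyl : y l = 0 := sq_eq_zero_iff.mp this
      have : lam l * β l = 0 := hyl
      simpa [mul_eq_zero, (hpos l).ne'] using this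
    simp [hα, hβ, Prod.ext_iff]
  have hsurj : Function.Surjective f :=
    (LinearMap.injective_iff_surjective).mp hinj
  set b : (Fin m → ℝ) × (Fin m → ℝ) :=
    (fun l => κ * k * q * c l, fun l => -(κ * k) * p * c l) with hb
  obtain ⟨ab, hab⟩ := hsurj b
  have key : ∀ αβ : (Fin m → ℝ) × (Fin m → ℝ),
      (∀ l : Fin m,
      (κ * k * αβ.2 l + ν * ∑ j : Fin m,
          ((if j = l then (1:ℝ) else 0) - ⟪w j, e⟫ * ⟪e, w l⟫) * lam j * αβ.1 j
        = κ * k * q * ⟪e, w l⟫) ∧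
      (-(κ * k) * αβ.1 l + ν * ∑ j : Fin m,
          ((if j = l then (1:ℝ) else 0) - ⟪w j, e⟫ * ⟪e, w l⟫) * lam j * αβ.2 j
        = -(κ * k) * p * ⟪e, w l⟫)) ↔ f αβ = b := by
    intro αβ
    simp only [hf, hb, LinearMap.coe_mk, AddHom.coe_mk, Prod.ext_iff, funext_iff]
    constructor
    · intro h
      constructor
      · intro l
        have := (h l).1
        simpa only [hcomm] using this
      · intro l
        have := (h l).2
        simpa only [hcomm] using this
    · intro h l
      refine ⟨?_, ?_⟩
      · have := h.1 l
        simpa only [hcomm] using this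
      · have := h.2 l
        simpa only [hcomm] using this
  refine ⟨ab, (key ab).mpr hab, fun a ha => ?_⟩
  exact hinj (((key a).mp ha).trans hab.symm)
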